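/- (Adequacy of collective p-bisimulation) Let (M,s) and (M′,s′) be pointed Kripke models, p an atom, and φ any formula of the language L^D_C in which p does not occur. If there is a collective p-bisimulation between (M,s) and (M′,s′), then M,s ⊨ φ if and only if M′,s′ ⊨ φ. -/

import Mathlib

/-!
Multi-agent epistemic modal logic with distributed knowledge and common knowledge.
Agents are `Fin n`, atoms are natural numbers.
-/

namespace DKLogic

/-- Formulas of the language `L^D_C`: atoms, negation, conjunction, disjunction,
the distributed-knowledge modality `D_B` for nonempty sets `B` of agents, and
the common-knowledge modality `C`. -/
inductive FormulaC (n : ℕ) : Type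
  | atom : ℕ → FormulaC n
  | neg : FormulaC n → FormulaC n
  | and : FormulaC n → FormulaC n → FormulaC n
  | or : FormulaC n → FormulaC n → FormulaC n
  | D : {B : Finset (Fin n) // B.Nonempty} → FormulaC n → FormulaC n
  | C : FormulaC n → FormulaC n

/-- The atoms occurring in a formula. -/
def FormulaC.atoms {n : ℕ} : FormulaC n → Finset ℕ
  | atom q => {q}
  | neg φ => atoms φ
  | and φ ψ => atoms φ ∪ atoms ψ
  | or φ ψ => atoms φ ∪ atoms ψ
  | D _ φ => atoms φ
  | C φ => atoms φ

/-- A Kripke model over world type `W` with `n` agents. -/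
structure KModel (n : ℕ) (W : Type) where
  R : Fin n → W → W → Prop
  V : W → Set ℕ

/-- The distributed accessibility relation `R_B = ⋂_{i ∈ B} R_i`. -/
def KModel.RB {n : ℕ} {W : Type} (M : KModel n W) (B : Finset (Fin n)) (s t : W) : Prop :=
  ∀ i ∈ B, M.R i s t

/-- `TCrel M s t` holds iff `t ∈ TC(s)`, i.e. `t` is in the image of `s` under the
transitive closure of `⋃_{i} R_i`. -/
def TCrel {n : ℕ} {W : Type} (M : KModel n W) : W → W → Prop :=
  Relation.TransGen (fun u v => ∃ i : Fin n, M.R i u v)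

/-- Satisfaction for `L^D_C`. -/
def Sat {n : ℕ} {W : Type} (M : KModel n W) : W → FormulaC n → Prop
  | s, .atom q => q ∈ M.V s
  | s, .neg φ => ¬ Sat M s φ
  | s, .and φ ψ => Sat M s φ ∧ Sat M s ψ
  | s, .or φ ψ => Sat M s φ ∨ Sat M s ψ
  | s, .D B φ => ∀ t : W, M.RB B.1 s t → Sat M t φ
  | s, .C φ => ∀ t : W, TCrel M s t → Sat M t φ

/-- Collective `p`-bisimulation between two pointed models. -/
def CollPBisim {n : ℕ} {W W' : Type} (M : KModel n W) (s : W) (M' : KModel n W') (s' : W')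
    (p : ℕ) : Prop :=
  ∃ ρ : W → W' → Prop, ρ s s' ∧
    ∀ u u', ρ u u' →
      ((∀ q : ℕ, q ≠ p → (q ∈ M.V u ↔ q ∈ M'.V u')) ∧
       (∀ B : Finset (Fin n), B.Nonempty → ∀ v, M.RB B u v → ∃ v', M'.RB B u' v' ∧ ρ v v') ∧
       (∀ B : Finset (Fin n), B.Nonempty → ∀ v', M'.RB B u' v' → ∃ v, M.RB B u v ∧ ρ v v'))

def IsCollPBisimRel {n : ℕ} {W W' : Type} (M : KModel n W) (M' : KModel n W') (p : ℕ)
    (ρ : W → W' → Prop) : Prop :=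
  ∀ u u', ρ u u' →
    ((∀ q : ℕ, q ≠ p → (q ∈ M.V u ↔ q ∈ M'.V u')) ∧
     (∀ B : Finset (Fin n), B.Nonempty → ∀ v, M.RB B u v → ∃ v', M'.RB B u' v' ∧ ρ v v') ∧
     (∀ B : Finset (Fin n), B.Nonempty → ∀ v', M'.RB B u' v' → ∃ v, M.RB B u v ∧ ρ v v'))

@[simp]
theorem KModel.RB_singleton {n : ℕ} {W : Type} (M : KModel n W) (i : Fin n) (u v : W) :
    M.RB {i} u v ↔ M.R i u v := by
  simp [KModel.RB]

theorem _root_.Relation.TransGen.exists_of_simulation {α β : Type*} {r : α → α → Prop}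
    {r' : β → β → Prop} {ρ : α → β → Prop}
    (hsim : ∀ a b a₁, ρ a b → r a a₁ → ∃ b₁, r' b b₁ ∧ ρ a₁ b₁)
    {a a₁ : α} {b : β} (hab : ρ a b) (h : Relation.TransGen r a a₁) :
    ∃ b₁, Relation.TransGen r' b b₁ ∧ ρ a₁ b₁ := by
  induction h with
  | single hstep =>
    obtain ⟨b₁, hb₁, hρ⟩ := hsim _ _ _ hab hstep
    exact ⟨b₁, .single hb₁, hρ⟩
  | tail _ hstep ih =>
    obtain ⟨c, hc, hρc⟩ := ih
    obtain ⟨b₁, hb₁, hρ⟩ := hsim _ _ _ hρc hstep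
    exact ⟨b₁, hc.tail hb₁, hρ⟩

theorem forall_rel_iff_of_forth_back {α β : Type*} {r : α → α → Prop} {r' : β → β → Prop}
    {ρ : α → β → Prop} {P : α → Prop} {P' : β → Prop} {a : α} {b : β}
    (forth : ∀ a₁, r a a₁ → ∃ b₁, r' b b₁ ∧ ρ a₁ b₁)
    (back : ∀ b₁, r' b b₁ → ∃ a₁, r a a₁ ∧ ρ a₁ b₁)
    (hP : ∀ a₁ b₁, ρ a₁ b₁ → (P a₁ ↔ P' b₁)) :
    (∀ a₁, r a a₁ → P a₁) ↔ ∀ b₁, r' b b₁ → P' b₁ := by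
  constructor
  · intro h b₁ hb₁
    obtain ⟨a₁, ha₁, hρ⟩ := back b₁ hb₁
    exact (hP _ _ hρ).mp (h a₁ ha₁)
  · intro h a₁ ha₁
    obtain ⟨b₁, hb₁, hρ⟩ := forth a₁ ha₁
    exact (hP _ _ hρ).mpr (h b₁ hb₁)

namespace IsCollPBisimRel

variable {n : ℕ} {W W' : Type} {M : KModel n W} {M' : KModel n W'} {p : ℕ}
  {ρ : W → W' → Prop}

theorem symm (hρ : IsCollPBisimRel M M' p ρ) : IsCollPBisimRel M' M p (flip ρ) := by
  intro u' u huu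
  obtain ⟨hatoms, hforth, hback⟩ := hρ u u' huu
  exact ⟨fun q hq => (hatoms q hq).symm, hback, hforth⟩

/-- Singleton coalitions `{i}` give forth along each `R_i`, hence along their union; this is what
lifts the bisimulation to the transitive closure used by `C`. -/
theorem forth_step (hρ : IsCollPBisimRel M M' p ρ) {u v : W} {u' : W'} (huu : ρ u u')
    (huv : ∃ i, M.R i u v) : ∃ v', (∃ i, M'.R i u' v') ∧ ρ v v' := by
  obtain ⟨i, hi⟩ := huv
  obtain ⟨v', hv', hρ⟩ := (hρ u u' huu).2.1 {i} (Finset.singleton_nonempty i) v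
    ((M.RB_singleton i u v).mpr hi)
  exact ⟨v', ⟨i, (M'.RB_singleton i u' v').mp hv'⟩, hρ⟩

theorem forth_TCrel (hρ : IsCollPBisimRel M M' p ρ) {u v : W} {u' : W'} (huu : ρ u u')
    (huv : TCrel M u v) : ∃ v', TCrel M' u' v' ∧ ρ v v' :=
  Relation.TransGen.exists_of_simulation (fun _ _ _ => hρ.forth_step) huu huv

theorem back_TCrel (hρ : IsCollPBisimRel M M' p ρ) {u : W} {u' v' : W'} (huu : ρ u u')
    (huv : TCrel M' u' v') : ∃ v, TCrel M u v ∧ ρ v v' :=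
  hρ.symm.forth_TCrel huu huv

theorem sat_iff (hρ : IsCollPBisimRel M M' p ρ) {φ : FormulaC n} (hp : p ∉ φ.atoms)
    {u : W} {u' : W'} (huu : ρ u u') : Sat M u φ ↔ Sat M' u' φ := by
  induction φ generalizing u u' with
  | atom q =>
    simp only [FormulaC.atoms, Finset.mem_singleton] at hp
    exact (hρ u u' huu).1 q (Ne.symm hp)
  | neg φ ih => exact not_congr (ih hp huu)
  | and φ ψ ihφ ihψ =>
    simp only [FormulaC.atoms, Finset.mem_union, not_or] at hp
    exact and_congr (ihφ hp.1 huu) (ihψ hp.2 huu)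
  | or φ ψ ihφ ihψ =>
    simp only [FormulaC.atoms, Finset.mem_union, not_or] at hp
    exact or_congr (ihφ hp.1 huu) (ihψ hp.2 huu)
  | D B φ ih =>
    exact forall_rel_iff_of_forth_back ((hρ u u' huu).2.1 B.1 B.2) ((hρ u u' huu).2.2 B.1 B.2)
      fun _ _ h => ih hp h
  | C φ ih =>
    exact forall_rel_iff_of_forth_back (fun _ => hρ.forth_TCrel huu) (fun _ => hρ.back_TCrel huu)
      fun _ _ h => ih hp h

end IsCollPBisimRel

/-- the adequacy lemma of collective `p`-bisimulation: if `(M,s)` and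
`(M',s')` are collectively `p`-bisimilar, then they satisfy the same `L^D_C`-formulas in
which `p` does not occur. -/
theorem collPBisim_adequacy {n : ℕ} {W W' : Type} (M : KModel n W) (s : W)
    (M' : KModel n W') (s' : W') (p : ℕ) (φ : FormulaC n) (hp : p ∉ φ.atoms)
    (h : CollPBisim M s M' s' p) :
    Sat M s φ ↔ Sat M' s' φ := by
  obtain ⟨ρ, hs, hρ⟩ := h
  exact IsCollPBisimRel.sat_iff hρ hp hs

end DKLogic
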